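/- arXiv:1211.7281 — 4 statements merged into one kernel-verified Lean document; each statement's English description precedes it below -/
import Mathlib

section
/- For every integer m ≥ 2, the determinant of the m×m matrix B^m — identical to A^m except that the (1,1) entry is e^{-ωa} and the (m,1) entry is ((-ω+α)/(ω+α))·e^{-ωa} — equals ((m-2)ω + α)/(ω + α) · e^{-ωa}. -/
open Matrix

lemma lowtri (n : ℕ) :
    Matrix.det (Matrix.of fun i j : Fin n =>
      if j.val = i.val then (-1 : ℂ) else if i.val = j.val + 1 then 1 else 0) = (-1) ^ n := by
  rw [Matrix.det_of_lowerTriangular]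
  · simp
  · intro i j h
    simp only [OrderDual.toDual_lt_toDual] at h
    simp only [of_apply]
    rw [if_neg, if_neg] <;> omega

lemma trow (n : ℕ) (c : ℂ) :
    Matrix.det (Matrix.of fun i j : Fin (n+1) =>
      if i.val = n then c else if j.val = i.val + 1 then -1
      else if i.val = j.val then 1 else 0) = (n + 1 : ℂ) * c := by
  induction n with
  | zero => simp [Matrix.det_fin_one]
  | succ n ih =>
    rw [Matrix.det_succ_column_zero, Fin.sum_univ_succ]
    have hm0 : ((Matrix.of fun i j : Fin (n+2) =>
        if i.val = n+1 then c else if j.val = i.val + 1 then -1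
        else if i.val = j.val then 1 else 0).submatrix (0 : Fin (n+2)).succAbove Fin.succ)
        = Matrix.of (fun i j : Fin (n+1) =>
          if i.val = n then c else if j.val = i.val + 1 then -1
          else if i.val = j.val then 1 else 0) := by
      ext i j
      simp only [Fin.succAbove_zero, submatrix_apply, of_apply, Fin.val_succ]
      split_ifs <;> first | rfl | omega | exact absurd ‹False› id
    have hml : ((Matrix.of fun i j : Fin (n+2) =>
        if i.val = n+1 then c else if j.val = i.val + 1 then -1
        else if i.val = j.val then 1 else 0).submatrix (Fin.last (n+1)).succAbove Fin.succ)
        = Matrix.of (fun i j : Fin (n+1) =>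
          if j.val = i.val then (-1 : ℂ) else if i.val = j.val + 1 then 1 else 0) := by
      ext i j
      simp only [Fin.succAbove_last, submatrix_apply, of_apply, Fin.val_succ, Fin.coe_castSucc]
      split_ifs <;> first | rfl | omega | exact absurd ‹False› id
    have h00 : (Matrix.of fun i j : Fin (n+2) =>
        if i.val = n+1 then c else if j.val = i.val + 1 then -1
        else if i.val = j.val then 1 else 0) 0 0 = 1 := by
      simp only [of_apply, Fin.val_zero]
      split_ifs <;> first | rfl | omega | exact absurd ‹False› id
    have hl0 : (Matrix.of fun i j : Fin (n+2) =>
        if i.val = n+1 then c else if j.val = i.val + 1 then -1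
        else if i.val = j.val then 1 else 0) (Fin.last n).succ 0 = c := by
      simp only [of_apply, Fin.val_succ, Fin.val_last, Fin.val_zero]
      split_ifs <;> first | rfl | omega | exact absurd ‹False› id
    rw [Finset.sum_eq_single (Fin.last n)]
    · have hsl : (Fin.last n).succ = Fin.last (n+1) := rfl
      rw [h00, hl0, hsl, hm0, hml, ih, lowtri]
      have hpow : ((-1 : ℂ)) ^ ((Fin.last (n+1) : Fin (n+2)) : ℕ) * c * (-1) ^ (n+1) = c := by
        simp only [Fin.val_last]
        rw [mul_comm, ← mul_assoc, ← pow_add]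
        simp [← two_mul, pow_mul]
      rw [hpow]
      simp only [Fin.val_zero, pow_zero, one_mul]
      push_cast
      ring
    · intro b _ hb
      have : (Matrix.of fun i j : Fin (n+2) =>
          if i.val = n+1 then c else if j.val = i.val + 1 then -1
          else if i.val = j.val then 1 else 0) b.succ 0 = 0 := by
        simp only [of_apply, Fin.val_succ, Fin.val_zero]
        have hbv : b.val < n := by
          have := Fin.val_lt_last hb
          simpa [Fin.val_last] using this
        split_ifs <;> first | rfl | omega | exact absurd ‹False› id
      rw [this]; ring
    · simp

theorem stmt_4 (m : ℕ) (hm : 2 ≤ m) (ω : ℂ) (α a : ℝ) (hωα : ω + (α : ℂ) ≠ 0) :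
    Matrix.det (Matrix.of fun i j : Fin m =>
      if j.val = 0 then
        (if i.val = 0 then Complex.exp (-(ω * a))
         else if i.val = m - 1 then (-ω + (α : ℂ)) / (ω + (α : ℂ)) * Complex.exp (-(ω * a))
         else 0)
      else if i.val = m - 1 then ω / (ω + (α : ℂ))
      else if j.val = i.val + 1 then -1
      else if i.val = j.val then 1
      else 0) = (((m : ℂ) - 2) * ω + (α : ℂ)) / (ω + (α : ℂ)) * Complex.exp (-(ω * a)) := by
  obtain ⟨n, rfl⟩ : ∃ n, m = n + 2 := ⟨m - 2, by omega⟩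
  set e := Complex.exp (-(ω * a)) with he
  set c := ω / (ω + (α : ℂ)) with hc
  set β := (-ω + (α : ℂ)) / (ω + (α : ℂ)) with hβ
  set M := (Matrix.of fun i j : Fin (n+2) =>
      if j.val = 0 then
        (if i.val = 0 then e else if i.val = n+2 - 1 then β * e else 0)
      else if i.val = n+2 - 1 then c
      else if j.val = i.val + 1 then -1
      else if i.val = j.val then 1
      else 0) with hM
  rw [Matrix.det_succ_column_zero, Fin.sum_univ_succ]
  have hm0 : M.submatrix (0 : Fin (n+2)).succAbove Fin.succ
      = Matrix.of (fun i j : Fin (n+1) =>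
        if i.val = n then c else if j.val = i.val + 1 then -1
        else if i.val = j.val then 1 else 0) := by
    ext i j
    simp only [hM, Fin.succAbove_zero, submatrix_apply, of_apply, Fin.val_succ]
    split_ifs <;> first | rfl | omega | exact absurd ‹False› id
  have hml : M.submatrix (Fin.last (n+1)).succAbove Fin.succ
      = Matrix.of (fun i j : Fin (n+1) =>
        if j.val = i.val then (-1 : ℂ) else if i.val = j.val + 1 then 1 else 0) := by
    ext i j
    simp only [hM, Fin.succAbove_last, submatrix_apply, of_apply, Fin.val_succ, Fin.coe_castSucc]
    split_ifs <;> first | rfl | omega | exact absurd ‹False› id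
  have hM00 : M 0 0 = e := by
    simp only [hM, of_apply, Fin.val_zero]
    split_ifs <;> first | rfl | omega | exact absurd ‹False› id
  have hMl0 : M (Fin.last n).succ 0 = β * e := by
    simp only [hM, of_apply, Fin.val_succ, Fin.val_last, Fin.val_zero]
    split_ifs <;> first | rfl | omega | exact absurd ‹False› id
  rw [Finset.sum_eq_single (Fin.last n)]
  · have hsl : (Fin.last n).succ = Fin.last (n+1) := rfl
    rw [hM00, hMl0, hsl, hm0, hml, trow, lowtri]
    rw [hsl] at hMl0
    have hpow : ((-1 : ℂ)) ^ ((Fin.last (n+1) : Fin (n+2)) : ℕ) * (β * e) * (-1) ^ (n+1)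
        = β * e := by
      simp only [Fin.val_last]
      rw [mul_comm, ← mul_assoc, ← pow_add]
      simp [← two_mul, pow_mul]
    rw [hpow]
    simp only [Fin.val_zero, pow_zero, one_mul]
    rw [hc, hβ]
    push_cast
    field_simp
    ring
  · intro b _ hb
    have hz : M b.succ 0 = 0 := by
      simp only [hM, of_apply, Fin.val_succ, Fin.val_zero]
      have hbv : b.val < n := by
        have := Fin.val_lt_last hb
        simpa [Fin.val_last] using this
      split_ifs <;> first | rfl | omega | exact absurd ‹False› id
    rw [hz]; ring
  · simp
end

section
/- For the n×n matrix D̃(ω) obtained from D(ω) by changing only the (n,n)-entry from ω/(ω+α) to -ω/(ω+α), one has det D̃(ω) = ((n-2)ω + α)/(ω + α). -/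
/-! The columns of the matrix sum to `(0, …, 0, s)`, where `s` is the sum of the last row, since
every other row has the form `eᵢ - eᵢ₊₁`. Replacing the first column by this column sum does not
change the determinant, and expanding along it leaves a lower triangular minor with diagonal `-1`,
so the determinant is `s = 1 + (n - 3) ω / (ω + α)`. -/

open Matrix

variable {R : Type*} [CommRing R]

def differenceMatrix (m : ℕ) (v : Fin (m + 1) → R) : Matrix (Fin (m + 1)) (Fin (m + 1)) R :=
  of fun i j =>
    if i.val = m then v j
    else if j.val = i.val then 1
    else if j.val = i.val + 1 then -1
    else 0

namespace differenceMatrix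

variable {m : ℕ} (v : Fin (m + 1) → R)

theorem row_castSucc (i : Fin m) :
    differenceMatrix m v i.castSucc = Pi.single i.castSucc 1 - Pi.single i.succ 1 := by
  ext j
  simp only [differenceMatrix, of_apply, Fin.val_castSucc, i.is_lt.ne, if_false, Pi.sub_apply,
    Pi.single_apply, Fin.ext_iff, Fin.val_succ]
  split_ifs <;> first | omega | simp

theorem row_last : differenceMatrix m v (Fin.last m) = v := by
  ext j; simp [differenceMatrix]

theorem mulVec_one : differenceMatrix m v *ᵥ 1 = Pi.single (Fin.last m) (∑ j, v j) := by
  ext i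
  rcases Fin.eq_castSucc_or_eq_last i with ⟨i, rfl⟩ | rfl
  · simp [mulVec, dotProduct, row_castSucc, Finset.sum_sub_distrib]
  · simp [mulVec, dotProduct, row_last]

theorem det_eq_sum : (differenceMatrix m v).det = ∑ j, v j := by
  set M := differenceMatrix m v
  have hdet : M.det = (M.updateCol 0 (Pi.single (Fin.last m) (∑ j, v j))).det := by
    rw [← mulVec_one, ← one_smul R M.det, ← det_updateCol_sum M 0 (fun _ => 1)]
    congr 2
    ext k
    simp [M, mulVec, dotProduct]
  set A := M.updateCol 0 (Pi.single (Fin.last m) (∑ j, v j))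
  have hminor (i j : Fin m) :
      A i.castSucc j.succ = (if (j : ℕ) + 1 = i then 1 else 0) - if (i : ℕ) = j then 1 else 0 := by
    simp [A, M, row_castSucc, Pi.single_apply, Fin.ext_iff, eq_comm]
  have hlower : (A.submatrix (Fin.last m).succAbove Fin.succ).IsLowerTriangular := by
    intro i j (hij : i < j)
    rw [submatrix_apply, Fin.succAbove_last, hminor, if_neg (by omega), if_neg (by omega), sub_zero]
  rw [hdet, det_succ_column_zero, Fintype.sum_eq_single (Fin.last m) fun i hi => by simp [A, hi],
    det_of_isLowerTriangular _ hlower]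
  simp only [submatrix_apply, Fin.succAbove_last, hminor, if_pos, Nat.succ_ne_self, if_false,
    zero_sub, A, updateCol_self, Pi.single_eq_same, Fin.val_last, Finset.prod_const,
    Finset.card_univ, Fintype.card_fin]
  rw [mul_right_comm, ← mul_pow, neg_one_mul, neg_neg, one_pow, one_mul]

end differenceMatrix

theorem stmt_6 (n : ℕ) (hn : 2 ≤ n) (ω : ℂ) (α : ℝ) (hωα : ω + (α : ℂ) ≠ 0) :
    Matrix.det (Matrix.of fun i j : Fin n =>
      if i.val = n - 1 then
        (if j.val = 0 then 1
         else if j.val = n - 1 then -(ω / (ω + (α : ℂ)))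
         else ω / (ω + (α : ℂ)))
      else if j.val = i.val then 1
      else if j.val = i.val + 1 then -1
      else 0) = (((n : ℂ) - 2) * ω + (α : ℂ)) / (ω + (α : ℂ)) := by
  obtain ⟨m, rfl⟩ : ∃ m, n = m + 2 := ⟨n - 2, by omega⟩
  let v : Fin (m + 2) → ℂ := fun j =>
    if j.val = 0 then 1 else if j.val = m + 1 then -(ω / (ω + α)) else ω / (ω + α)
  have hsum : ∑ j, v j = 1 + ((m : ℂ) - 1) * (ω / (ω + α)) := by
    rw [Fin.sum_univ_succ, Fin.sum_univ_castSucc]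
    simp only [v, Fin.val_eq_zero_iff, ↓reduceIte, Fin.succ_ne_zero, Fin.val_succ,
      Fin.val_castSucc, Nat.add_right_cancel_iff, (Fin.is_lt _).ne, Finset.sum_const,
      Finset.card_univ, Fintype.card_fin, nsmul_eq_mul, Fin.val_last]
    ring
  change (differenceMatrix (m + 1) v).det = _
  rw [differenceMatrix.det_eq_sum, hsum]
  field_simp
  push_cast
  ring
end

section
/- Define recursively the rational functions g_p of a complex variable ω by g_1(ω) = α_1/(n_1·ω + α_1) and g_p(ω) = [((n_p-2)ω + α_p)/(n_p·ω + α_p) - ((n_p-4)ω + α_p)/(n_p·ω + α_p)·e^{-2ω a_{p-1}}·g_{p-1}(ω)] / [1 - ((n_p-2)ω + α_p)/(n_p·ω + α_p)·e^{-2ω a_{p-1}}·g_{p-1}(ω)]. If all strengths α_j are positive and all lengths a_j are positive, then for every p ≥ 1 the limit of g_p(ω) as ω → 0 along the reals exists and equals 1, i.e. g_p extends continuously to ω = 0 with g_p(0) = 1. -/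
/-- `gfun n α a p` is the function `g_{p+1}` of the paper (0-based indexing):
`g_1(ω) = α_1/(n_1 ω + α_1)` and
`g_p(ω) = [((n_p-2)ω+α_p)/(n_pω+α_p) - ((n_p-4)ω+α_p)/(n_pω+α_p) e^{-2ωa_{p-1}} g_{p-1}(ω)]
          / [1 - ((n_p-2)ω+α_p)/(n_pω+α_p) e^{-2ωa_{p-1}} g_{p-1}(ω)]`. -/
noncomputable def gfun (n : ℕ → ℕ) (α a : ℕ → ℝ) : ℕ → ℂ → ℂ
  | 0, ω => (α 0 : ℂ) / ((n 0 : ℂ) * ω + (α 0 : ℂ))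
  | p + 1, ω =>
      (((((n (p + 1) : ℂ) - 2) * ω + (α (p + 1) : ℂ)) / ((n (p + 1) : ℂ) * ω + (α (p + 1) : ℂ)))
        - ((((n (p + 1) : ℂ) - 4) * ω + (α (p + 1) : ℂ)) / ((n (p + 1) : ℂ) * ω + (α (p + 1) : ℂ)))
          * Complex.exp (-2 * ω * (a p : ℂ)) * gfun n α a p ω) /
      (1 - ((((n (p + 1) : ℂ) - 2) * ω + (α (p + 1) : ℂ)) / ((n (p + 1) : ℂ) * ω + (α (p + 1) : ℂ)))
          * Complex.exp (-2 * ω * (a p : ℂ)) * gfun n α a p ω)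

/-!
Write `g_p(t) = 1 - L_p t + o(t)` as `t → 0`. Induction on `p` shows that such an `L_p ≥ 0`
exists. With `w = e^{-2 t a_{p-1}} g_{p-1}` and `X = n_p t + α_p`, one has
`1 - g_p = (2t/X)(1 - w) / (1 - w + (2t/X) w)`, and `1 - w = K t + o(t)` with
`K = L_{p-1} + 2 a_{p-1} ≥ 0`. The denominator is therefore `(K + 2/α_p) t + o(t)` with
`K + 2/α_p > 0`, so the `0/0` cancels and `L_p = 2K / (α_p K + 2)`.
-/

open Filter Topology

lemma tendsto_ofReal_nhdsNE_zero : Tendsto (fun t : ℝ => (t : ℂ)) (𝓝[≠] 0) (𝓝 0) := by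
  simpa using Complex.continuous_ofReal.continuousWithinAt.tendsto (x := 0) (s := {0}ᶜ)

lemma eventually_ofReal_ne_zero : ∀ᶠ t : ℝ in 𝓝[≠] 0, (t : ℂ) ≠ 0 := by
  filter_upwards [self_mem_nhdsWithin] with t ht using Complex.ofReal_ne_zero.mpr ht

lemma tendsto_mul_ofReal_add (m β : ℂ) :
    Tendsto (fun t : ℝ => m * t + β) (𝓝[≠] 0) (𝓝 β) := by
  simpa using (tendsto_ofReal_nhdsNE_zero.const_mul m).add_const β

section OneSubDiv

variable {f g : ℝ → ℂ} {A B : ℂ}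

lemma tendsto_one_of_tendsto_one_sub_div
    (hf : Tendsto (fun t : ℝ => (1 - f t) / t) (𝓝[≠] 0) (𝓝 A)) :
    Tendsto f (𝓝[≠] 0) (𝓝 1) := by
  have h := tendsto_const_nhds (x := (1 : ℂ)) |>.sub (tendsto_ofReal_nhdsNE_zero.mul hf)
  rw [zero_mul, sub_zero] at h
  refine h.congr' ?_
  filter_upwards [eventually_ofReal_ne_zero] with t ht
  field_simp
  ring

lemma tendsto_one_sub_mul_div
    (hf : Tendsto (fun t : ℝ => (1 - f t) / t) (𝓝[≠] 0) (𝓝 A))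
    (hg : Tendsto (fun t : ℝ => (1 - g t) / t) (𝓝[≠] 0) (𝓝 B)) :
    Tendsto (fun t : ℝ => (1 - f t * g t) / t) (𝓝[≠] 0) (𝓝 (A + B)) := by
  have h := hf.add ((tendsto_one_of_tendsto_one_sub_div hf).mul hg)
  rw [one_mul] at h
  exact h.congr fun t => by ring

end OneSubDiv

lemma tendsto_one_sub_cexp_div (b : ℂ) :
    Tendsto (fun t : ℝ => (1 - Complex.exp (-2 * t * b)) / t) (𝓝[≠] 0) (𝓝 (2 * b)) := by
  have hderiv : HasDerivAt (fun t : ℝ => Complex.exp (-2 * t * b)) (-2 * b) 0 := by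
    have h := (((hasDerivAt_id (0 : ℂ)).const_mul (-2 : ℂ)).mul_const b).cexp.comp_ofReal
    simpa using h
  have h := hderiv.tendsto_slope_zero.neg
  rw [show -(-2 * b) = 2 * b by ring] at h
  refine h.congr fun t => ?_
  simp only [zero_add, Complex.ofReal_zero, mul_zero, zero_mul, Complex.exp_zero,
    Complex.real_smul, Complex.ofReal_inv]
  ring

lemma tendsto_one_sub_div_mul_add_div {m β : ℂ} (hβ : β ≠ 0) :
    Tendsto (fun t : ℝ => (1 - β / (m * t + β)) / t) (𝓝[≠] 0) (𝓝 (m / β)) := by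
  have hX := tendsto_mul_ofReal_add m β
  refine (tendsto_const_nhds.div hX hβ).congr' ?_
  filter_upwards [eventually_ofReal_ne_zero, hX.eventually_ne hβ] with t ht hXt
  simp only [Pi.div_apply]
  field_simp
  ring

lemma one_sub_recursion_div_eq {m β t w : ℂ} (ht : t ≠ 0) (hX : m * t + β ≠ 0)
    (hden : (m * t + β) * ((1 - w) / t) + 2 * w ≠ 0) :
    (1 - (((m - 2) * t + β) / (m * t + β) - ((m - 4) * t + β) / (m * t + β) * w) /
        (1 - ((m - 2) * t + β) / (m * t + β) * w)) / t =
      2 * ((1 - w) / t) / ((m * t + β) * ((1 - w) / t) + 2 * w) := by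
  generalize hv : (m * t + β) * ((1 - w) / t) + 2 * w = v at hden ⊢
  have hD : 1 - ((m - 2) * t + β) / (m * t + β) * w = t * v / (m * t + β) := by
    rw [← hv]
    field_simp
    ring
  rw [hD]
  field_simp
  rw [← hv]
  field_simp
  ring

lemma tendsto_one_sub_recursion_div {w : ℝ → ℂ} {K m β : ℂ} (hβ : β ≠ 0)
    (hK : β * K + 2 ≠ 0) (hw : Tendsto (fun t : ℝ => (1 - w t) / t) (𝓝[≠] 0) (𝓝 K)) :
    Tendsto (fun t : ℝ =>
        (1 - (((m - 2) * t + β) / (m * t + β) - ((m - 4) * t + β) / (m * t + β) * w t) /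
          (1 - ((m - 2) * t + β) / (m * t + β) * w t)) / t)
      (𝓝[≠] 0) (𝓝 (2 * K / (β * K + 2))) := by
  have hX := tendsto_mul_ofReal_add m β
  have hden : Tendsto (fun t : ℝ => (m * t + β) * ((1 - w t) / t) + 2 * w t) (𝓝[≠] 0)
      (𝓝 (β * K + 2)) := by
    simpa using (hX.mul hw).add ((tendsto_one_of_tendsto_one_sub_div hw).const_mul 2)
  refine ((hw.const_mul 2).div hden hK).congr' ?_
  filter_upwards [eventually_ofReal_ne_zero, hX.eventually_ne hβ, hden.eventually_ne hK]
    with t ht hXt hdent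
  simp only [Pi.div_apply]
  exact (one_sub_recursion_div_eq ht hXt hdent).symm

lemma exists_tendsto_one_sub_gfun_div (n : ℕ → ℕ) (α a : ℕ → ℝ) (hα : ∀ j, 0 < α j)
    (ha : ∀ j, 0 < a j) (p : ℕ) :
    ∃ L : ℝ, 0 ≤ L ∧
      Tendsto (fun t : ℝ => (1 - gfun n α a p t) / t) (𝓝[≠] 0) (𝓝 (L : ℂ)) := by
  induction p with
  | zero =>
    refine ⟨n 0 / α 0, by have := hα 0; positivity, ?_⟩
    push_cast
    exact tendsto_one_sub_div_mul_add_div (Complex.ofReal_ne_zero.mpr (hα 0).ne')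
  | succ p ih =>
    obtain ⟨L, hL, hT⟩ := ih
    set K : ℝ := L + 2 * a p
    have hK : 0 ≤ K := by have := ha p; positivity
    have hαK : α (p + 1) * K + 2 ≠ 0 := by have := hα (p + 1); positivity
    refine ⟨2 * K / (α (p + 1) * K + 2), by have := hα (p + 1); positivity, ?_⟩
    have hw := tendsto_one_sub_mul_div (tendsto_one_sub_cexp_div (a p)) hT
    rw [show 2 * (a p : ℂ) + L = K by push_cast [K]; ring] at hw
    have h := tendsto_one_sub_recursion_div (m := n (p + 1))
      (Complex.ofReal_ne_zero.mpr (hα (p + 1)).ne') (by exact_mod_cast hαK) hw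
    push_cast
    exact h.congr fun t => by simp only [gfun, mul_assoc]

theorem stmt_7_general (n : ℕ → ℕ) (α a : ℕ → ℝ)
    (hα : ∀ j, 0 < α j) (ha : ∀ j, 0 < a j) (p : ℕ) :
    Filter.Tendsto (fun t : ℝ => gfun n α a p (t : ℂ))
      (nhdsWithin 0 {0}ᶜ) (nhds 1) := by
  obtain ⟨L, -, hL⟩ := exists_tendsto_one_sub_gfun_div n α a hα ha p
  exact tendsto_one_of_tendsto_one_sub_div hL

theorem stmt_7 (n : ℕ → ℕ) (hn : ∀ j, 2 ≤ n j) (α a : ℕ → ℝ)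
    (hα : ∀ j, 0 < α j) (ha : ∀ j, 0 < a j) (p : ℕ) :
    Filter.Tendsto (fun t : ℝ => gfun n α a p (t : ℂ))
      (nhdsWithin 0 {0}ᶜ) (nhds 1) :=
  stmt_7_general n α a hα ha p
end

section
/- Define f_p recursively by f_1(ω) = (n_1 ω + α_1)/(ω + α_1) and f_p(ω) = ((n_p ω + α_p)/(ω + α_p))·e^{ω a_{p-1}}·f_{p-1}(ω)·(1 - ((n_p-2)ω + α_p)/(n_p ω + α_p)·e^{-2ω a_{p-1}}·g_{p-1}(ω)), with g_p as above. If all α_j > 0, a_j > 0, n_j ≥ 2, then ω = 0 is a zero of f_p of order exactly p-1; in particular the (p-1)-st derivative of f_p at 0 is nonzero. -/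
/-- `ffun n α a p` is the determinant function `f_{p+1}` of the paper (0-based indexing):
`f_1(ω) = (n_1 ω + α_1)/(ω + α_1)` and
`f_p(ω) = ((n_p ω + α_p)/(ω + α_p)) e^{ω a_{p-1}} f_{p-1}(ω)
            (1 - ((n_p-2)ω+α_p)/(n_p ω+α_p) e^{-2ω a_{p-1}} g_{p-1}(ω))`. -/
noncomputable def ffun (n : ℕ → ℕ) (α a : ℕ → ℝ) : ℕ → ℂ → ℂ
  | 0, ω => ((n 0 : ℂ) * ω + (α 0 : ℂ)) / (ω + (α 0 : ℂ))
  | p + 1, ω =>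
      (((n (p + 1) : ℂ) * ω + (α (p + 1) : ℂ)) / (ω + (α (p + 1) : ℂ)))
        * Complex.exp (ω * (a p : ℂ)) * ffun n α a p ω *
      (1 - ((((n (p + 1) : ℂ) - 2) * ω + (α (p + 1) : ℂ)) / ((n (p + 1) : ℂ) * ω + (α (p + 1) : ℂ)))
          * Complex.exp (-2 * ω * (a p : ℂ)) * gfun n α a p ω)

open Filter Topology

/-!
Write `g_p(ω) = 1 + c_p ω + o(ω)` near `ω = 0`. The factor
`Q(ω) = 1 - r(ω) e^{-2ωa} g(ω)`, with `r(ω) = ((n-2)ω+α)/(nω+α) = 1 - (2/α)ω + O(ω²)`, then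
satisfies `Q(ω)/ω → 2/α + 2a - c_p`, which is positive as long as `c_p < 0`. The recursion
gives `g_{p+1} - 1 = (2ω/(nω+α)) (e^{-2ωa} g_p - 1) / Q`, so
`c_{p+1} = (2/α)(c_p - 2a) / (2/α + 2a - c_p) < 0`, starting from `c_1 = -n_1/α_1`.
Since `f_{p+1}(ω)/ω^{p+1} = (1 + O(ω)) · (f_p(ω)/ω^p) · (Q(ω)/ω)`, each step multiplies
the limit by the nonzero number `Q'(0)`.
-/

section Slope

variable {𝕜 : Type*} [NontriviallyNormedField 𝕜]

/-- Only a punctured neighbourhood of `0` is involved: `gfun n α a (p + 1) 0` is the junk value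
`x / 0`, the singularity there being removable. -/
def TendstoOneWithSlope (u : 𝕜 → 𝕜) (s : 𝕜) : Prop :=
  Tendsto (fun ω => (u ω - 1) / ω) (𝓝[≠] 0) (𝓝 s)

theorem HasDerivAt.tendstoOneWithSlope {u : 𝕜 → 𝕜} {s : 𝕜} (hu : HasDerivAt u s 0)
    (hu0 : u 0 = 1) : TendstoOneWithSlope u s := by
  refine (hasDerivAt_iff_tendsto_slope_zero.mp hu).congr fun ω => ?_
  simp [hu0, div_eq_inv_mul]

namespace TendstoOneWithSlope

variable {u v : 𝕜 → 𝕜} {s t : 𝕜}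

theorem tendsto_one (hu : TendstoOneWithSlope u s) : Tendsto u (𝓝[≠] 0) (𝓝 1) := by
  have hid : Tendsto (fun ω : 𝕜 => ω) (𝓝[≠] 0) (𝓝 0) := tendsto_nhdsWithin_of_tendsto_nhds tendsto_id
  have h := tendsto_const_nhds (x := (1 : 𝕜)).add (hu.mul hid)
  rw [mul_zero, add_zero] at h
  refine h.congr' ?_
  filter_upwards [self_mem_nhdsWithin] with ω (hω : ω ≠ 0)
  field_simp
  ring

theorem mul (hu : TendstoOneWithSlope u s) (hv : TendstoOneWithSlope v t) :
    TendstoOneWithSlope (fun ω => u ω * v ω) (s + t) := by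
  have h := (hu.tendsto_one.mul hv).add hu
  rw [one_mul, add_comm] at h
  refine h.congr' ?_
  filter_upwards [self_mem_nhdsWithin] with ω (hω : ω ≠ 0)
  field_simp
  ring

end TendstoOneWithSlope

theorem tendstoOneWithSlope_linear_div_linear (b c A : 𝕜) (hA : A ≠ 0) :
    TendstoOneWithSlope (fun ω => (b * ω + A) / (c * ω + A)) ((b - c) / A) := by
  have hnum : HasDerivAt (fun ω : 𝕜 => b * ω + A) b 0 := by
    simpa using ((hasDerivAt_id (0 : 𝕜)).const_mul b).add_const A
  have hden : HasDerivAt (fun ω : 𝕜 => c * ω + A) c 0 := by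
    simpa using ((hasDerivAt_id (0 : 𝕜)).const_mul c).add_const A
  refine HasDerivAt.tendstoOneWithSlope ?_ (by simp [hA])
  refine (hnum.div hden (by simpa using hA)).congr_deriv ?_
  simp only [mul_zero, zero_add]
  field_simp

end Slope

theorem tendstoOneWithSlope_cexp (k : ℂ) :
    TendstoOneWithSlope (fun ω => Complex.exp (ω * k)) k :=
  HasDerivAt.tendstoOneWithSlope (by simpa using ((hasDerivAt_id (0 : ℂ)).mul_const k).cexp)
    (by simp)

theorem tendstoOneWithSlope_cexp_neg_two_mul (b : ℂ) :
    TendstoOneWithSlope (fun ω => Complex.exp (-2 * ω * b)) (-2 * b) := by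
  have h := tendstoOneWithSlope_cexp (-2 * b)
  rwa [show (fun ω => Complex.exp (ω * (-2 * b))) = fun ω => Complex.exp (-2 * ω * b) from
    funext fun ω => by ring_nf] at h

/-- The factor `Q_{p+2}` of the paper (0-based indexing, as in `ffun`). -/
noncomputable def qfun (n : ℕ → ℕ) (α a : ℕ → ℝ) (p : ℕ) (ω : ℂ) : ℂ :=
  1 - ((((n (p + 1) : ℂ) - 2) * ω + (α (p + 1) : ℂ)) / ((n (p + 1) : ℂ) * ω + (α (p + 1) : ℂ)))
    * Complex.exp (-2 * ω * (a p : ℂ)) * gfun n α a p ω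

theorem ffun_succ (n : ℕ → ℕ) (α a : ℕ → ℝ) (p : ℕ) (ω : ℂ) :
    ffun n α a (p + 1) ω =
      (((n (p + 1) : ℂ) * ω + (α (p + 1) : ℂ)) / (ω + (α (p + 1) : ℂ)))
        * Complex.exp (ω * (a p : ℂ)) * ffun n α a p ω * qfun n α a p ω :=
  rfl

theorem gfun_succ (n : ℕ → ℕ) (α a : ℕ → ℝ) (p : ℕ) (ω : ℂ) :
    gfun n α a (p + 1) ω =
      (((((n (p + 1) : ℂ) - 2) * ω + (α (p + 1) : ℂ)) / ((n (p + 1) : ℂ) * ω + (α (p + 1) : ℂ)))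
        - ((((n (p + 1) : ℂ) - 4) * ω + (α (p + 1) : ℂ)) / ((n (p + 1) : ℂ) * ω + (α (p + 1) : ℂ)))
          * Complex.exp (-2 * ω * (a p : ℂ)) * gfun n α a p ω) / qfun n α a p ω :=
  rfl

theorem tendsto_qfun_div (n : ℕ → ℕ) (α a : ℕ → ℝ) (p : ℕ) (hα : (α (p + 1) : ℂ) ≠ 0) {c : ℂ}
    (hg : TendstoOneWithSlope (gfun n α a p) c) :
    Tendsto (fun ω => qfun n α a p ω / ω) (𝓝[≠] 0)
      (𝓝 (2 / (α (p + 1) : ℂ) + 2 * (a p : ℂ) - c)) := by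
  have hr := tendstoOneWithSlope_linear_div_linear ((n (p + 1) : ℂ) - 2) (n (p + 1)) _ hα
  have hE := tendstoOneWithSlope_cexp_neg_two_mul (a p : ℂ)
  convert ((hr.mul hE).mul hg).neg using 1
  · funext ω
    rw [qfun]
    ring
  · congr 1
    field_simp
    ring

theorem gfun_succ_sub_one_div (n : ℕ → ℕ) (α a : ℕ → ℝ) (p : ℕ) {ω : ℂ} (hω : ω ≠ 0)
    (hD : (n (p + 1) : ℂ) * ω + α (p + 1) ≠ 0) (hQ : qfun n α a p ω ≠ 0) :
    (gfun n α a (p + 1) ω - 1) / ω =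
      2 / ((n (p + 1) : ℂ) * ω + α (p + 1))
        * ((Complex.exp (-2 * ω * (a p : ℂ)) * gfun n α a p ω - 1) / ω) / (qfun n α a p ω / ω) := by
  have hnum : gfun n α a (p + 1) ω * qfun n α a p ω - qfun n α a p ω =
      2 / ((n (p + 1) : ℂ) * ω + α (p + 1))
        * (Complex.exp (-2 * ω * (a p : ℂ)) * gfun n α a p ω - 1) * ω := by
    rw [gfun_succ, div_mul_cancel₀ _ hQ, qfun]
    field_simp
    ring
  rw [← mul_div_cancel_right₀ (gfun n α a (p + 1) ω - 1) hQ, sub_one_mul, hnum]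
  field_simp

theorem TendstoOneWithSlope.gfun_succ {n : ℕ → ℕ} {α a : ℕ → ℝ} {p : ℕ} {c : ℂ}
    (hg : TendstoOneWithSlope (gfun n α a p) c) (hA : (α (p + 1) : ℂ) ≠ 0)
    (hd : 2 / (α (p + 1) : ℂ) + 2 * (a p : ℂ) - c ≠ 0) :
    TendstoOneWithSlope (gfun n α a (p + 1))
      (2 / α (p + 1) * (c - 2 * a p) / (2 / (α (p + 1) : ℂ) + 2 * (a p : ℂ) - c)) := by
  have hQ := tendsto_qfun_div n α a p hA hg
  have hEg := (tendstoOneWithSlope_cexp_neg_two_mul (a p : ℂ)).mul hg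
  have hD : ContinuousAt (fun ω : ℂ => (n (p + 1) : ℂ) * ω + α (p + 1)) 0 := by fun_prop
  have hD0 : (n (p + 1) : ℂ) * 0 + α (p + 1) ≠ 0 := by simpa using hA
  have hlim := ((hD.tendsto.inv₀ hD0).const_mul 2).mono_left nhdsWithin_le_nhds
    |>.mul hEg |>.div hQ hd
  rw [mul_zero, zero_add, ← div_eq_mul_inv, neg_mul, neg_add_eq_sub] at hlim
  refine hlim.congr' ?_
  filter_upwards [self_mem_nhdsWithin, hQ.eventually_ne hd,
    nhdsWithin_le_nhds (hD.eventually_ne hD0)] with ω (hω : ω ≠ 0) hQω hDω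
  rw [gfun_succ_sub_one_div n α a p hω hDω (fun h => hQω (by rw [h, zero_div])), div_eq_mul_inv 2]
  rfl

theorem exists_neg_tendstoOneWithSlope_gfun (n : ℕ → ℕ) (hn : 0 < n 0) (α a : ℕ → ℝ)
    (hα : ∀ j, 0 < α j) (ha : ∀ j, 0 ≤ a j) (p : ℕ) :
    ∃ c : ℝ, c < 0 ∧ TendstoOneWithSlope (gfun n α a p) c := by
  induction p with
  | zero =>
    refine ⟨-(n 0) / α 0, div_neg_of_neg_of_pos (by simpa using hn) (hα 0), ?_⟩
    have h := tendstoOneWithSlope_linear_div_linear 0 (n 0 : ℂ) (α 0) (by exact_mod_cast (hα 0).ne')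
    simp only [zero_mul, zero_add, zero_sub] at h
    push_cast
    exact h
  | succ p ih =>
    obtain ⟨c, hc, hg⟩ := ih
    have hα' := div_pos two_pos (hα (p + 1))
    have hd : 0 < 2 / α (p + 1) + 2 * a p - c := by linarith [ha p]
    refine ⟨2 / α (p + 1) * (c - 2 * a p) / (2 / α (p + 1) + 2 * a p - c),
      div_neg_of_neg_of_pos (mul_neg_of_pos_of_neg hα' (by linarith [ha p])) hd, ?_⟩
    push_cast
    exact hg.gfun_succ (by exact_mod_cast (hα (p + 1)).ne') (by exact_mod_cast hd.ne')

/-- `ω = 0` is a zero of `f_{p+1}` of order exactly `p`: the quotient `f_{p+1}(ω)/ω^p`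
tends to a nonzero limit as `ω → 0`. -/
theorem stmt_9 (n : ℕ → ℕ) (hn : ∀ j, 2 ≤ n j) (α a : ℕ → ℝ)
    (hα : ∀ j, 0 < α j) (ha : ∀ j, 0 < a j) (p : ℕ) :
    ∃ L : ℂ, L ≠ 0 ∧
      Filter.Tendsto (fun ω : ℂ => ffun n α a p ω / ω ^ p)
        (nhdsWithin 0 {0}ᶜ) (nhds L) := by
  have hA (j : ℕ) : (α j : ℂ) ≠ 0 := by exact_mod_cast (hα j).ne'
  induction p with
  | zero =>
    refine ⟨1, one_ne_zero, ?_⟩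
    simpa [ffun] using (tendstoOneWithSlope_linear_div_linear (n 0 : ℂ) 1 _ (hA 0)).tendsto_one
  | succ p ih =>
    obtain ⟨L, hL, hf⟩ := ih
    obtain ⟨c, hc, hg⟩ := exists_neg_tendstoOneWithSlope_gfun n (by linarith [hn 0]) α a hα (fun j => (ha j).le) p
    have hd : 0 < 2 / α (p + 1) + 2 * a p - c := by linarith [div_pos two_pos (hα (p + 1)), ha p]
    have hF := ((tendstoOneWithSlope_linear_div_linear (n (p + 1) : ℂ) 1 _ (hA (p + 1))).mul
      (tendstoOneWithSlope_cexp (a p))).tendsto_one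
    refine ⟨1 * L * (2 / (α (p + 1) : ℂ) + 2 * a p - c), ?_, ?_⟩
    · exact mul_ne_zero (by simpa using hL) (by exact_mod_cast hd.ne')
    refine ((hF.mul hf).mul (tendsto_qfun_div n α a p (hA (p + 1)) hg)).congr' ?_
    filter_upwards [self_mem_nhdsWithin] with ω (hω : ω ≠ 0)
    rw [ffun_succ]
    field_simp
    ring
end
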